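/- arXiv:1710.11565 — 2 statements merged into one kernel-verified Lean document; each statement's English description precedes it below -/
import Mathlib

section
/- Multiplicativity theorem: let ρ be a unitary representation of G = S_∞ × S_∞ × S_∞ on a complex Hilbert space V. For all α, β, γ ∈ ℕ and all p, q ∈ G, there exists N such that for all j ≥ N and all v ∈ V[γ], P[α]( ρ(p) ( P[β]( ρ(q) v ) ) ) = P[α]( ρ(p · Θ_j[β] · q) v ). (Equivalently, the compressions p ↦ P[α] ρ(p)|_{V[β]} define a representation of the category of double cosets: the composition of the compressions of p and q equals the compression of any representative of the ⊛-product of their double cosets.) -/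
/-!
Put `w = ρ(q) v`. For `m` large, `w` and `ρ(p)⁻¹ z` (`z ∈ V[α]`) lie in `V[m]`, so it suffices
that `⟪ρ(Θ_j[β]) w, u⟫ = ⟪P[β] w, u⟫` for `u, w ∈ V[m]` and `j > m`. Matrix coefficients
between `K[m]`-fixed vectors only depend on the `K[m]`-double coset of the group element. Hence
`⟪ρ(Θ_j[β]) w, u⟫` does not depend on `j > m`, and for rapidly increasing `j₀ < j₁ < ⋯` the
vectors `yᵢ = ρ(Θ_{jᵢ}[β]) w` have constant pairwise inner products, so their Cesàro means
converge. The limit is `K[β]`-invariant (an element of `K[β]` is conjugated into `K[m]` by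
`Θ_j[β]` once `j` exceeds its support) and differs from `w` by a vector orthogonal to `V[β]`:
it is `P[β] w`.
-/

open Equiv

abbrev P3 := Equiv.Perm ℕ × Equiv.Perm ℕ × Equiv.Perm ℕ

/-- The subgroup of finitely supported permutations of `ℕ`. -/
def Sinf : Subgroup (Equiv.Perm ℕ) where
  carrier := {g | {x | g x ≠ x}.Finite}
  one_mem' := by
    show Set.Finite {x | (1 : Equiv.Perm ℕ) x ≠ x}
    convert Set.finite_empty
    ext x; simp
  mul_mem' {f g} hf hg := by
    apply Set.Finite.subset (hf.union hg)
    intro x hx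
    simp only [Set.mem_setOf_eq, Set.mem_union, Equiv.Perm.mul_apply] at hx ⊢
    by_contra hc
    push_neg at hc
    rw [hc.2] at hx
    exact hx hc.1
  inv_mem' {g} hg := by
    apply Set.Finite.subset hg
    intro x hx
    simp only [Set.mem_setOf_eq] at hx ⊢
    intro h
    apply hx
    apply g.injective
    rw [Equiv.Perm.coe_inv, Equiv.apply_symm_apply, h]

/-- Permutations fixing every point `< α`. -/
def fixLt (α : ℕ) : Subgroup (Equiv.Perm ℕ) where
  carrier := {g | ∀ i < α, g i = i}
  one_mem' := fun _ _ => rfl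
  mul_mem' {f g} hf hg := fun i hi => by
    simp only [Equiv.Perm.mul_apply, hg i hi, hf i hi]
  inv_mem' {g} hg := fun i hi => by
    apply g.injective
    rw [Equiv.Perm.coe_inv, Equiv.apply_symm_apply, hg i hi]

/-- The diagonal embedding of `Perm ℕ` into the triple product. -/
def diag3 : Equiv.Perm ℕ →* P3 where
  toFun h := (h, h, h)
  map_one' := rfl
  map_mul' _ _ := rfl

/-- `G = S_∞ × S_∞ × S_∞`. -/
def Ggrp : Subgroup P3 := Sinf.prod (Sinf.prod Sinf)

/-- `K[α]`: diagonal triples `(h,h,h)` with `h ∈ S_∞` fixing `0,…,α-1`. -/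
def KK (α : ℕ) : Subgroup P3 := Subgroup.map diag3 (Sinf ⊓ fixLt α)

/-- The double coset `L·p·M`. -/
def dcosOf (L M : Subgroup P3) (p : P3) : Set P3 :=
  {y | ∃ a ∈ L, ∃ b ∈ M, y = a * p * b}

/-- underlying function of `θ_j[β]`. -/
def thetaFun (β j : ℕ) (x : ℕ) : ℕ :=
  if β ≤ x ∧ x < β + j then x + j
  else if β + j ≤ x ∧ x < β + 2 * j then x - j
  else x

lemma thetaFun_invol (β j : ℕ) : ∀ x, thetaFun β j (thetaFun β j x) = x := by
  intro x
  simp only [thetaFun]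
  split_ifs <;> omega

/-- `θ_j[β]`: swaps the blocks `[β, β+j)` and `[β+j, β+2j)`. -/
def theta (β j : ℕ) : Equiv.Perm ℕ :=
  ⟨thetaFun β j, thetaFun β j, thetaFun_invol β j, thetaFun_invol β j⟩

lemma theta_mem_Sinf (β j : ℕ) : theta β j ∈ Sinf := by
  apply Set.Finite.subset (Set.finite_Iio (β + 2 * j))
  intro x hx
  simp only [Set.mem_setOf_eq, theta, Equiv.coe_fn_mk, Set.mem_Iio] at hx ⊢
  by_contra hc
  push_neg at hc
  apply hx
  simp only [thetaFun]
  split_ifs <;> omega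

/-- `Θ_j[β] = (θ_j[β], θ_j[β], θ_j[β])`. -/
def ThetaP (β j : ℕ) : P3 := diag3 (theta β j)

lemma KK_le_G {α : ℕ} : KK α ≤ Ggrp := by
  rintro g ⟨h, hh, rfl⟩
  exact ⟨hh.1, hh.1, hh.1⟩

lemma Theta_mem_G (β j : ℕ) : ThetaP β j ∈ Ggrp :=
  ⟨theta_mem_Sinf β j, theta_mem_Sinf β j, theta_mem_Sinf β j⟩

open Finset Filter Topology

section Cesaro

variable (𝕜 : Type*) {E : Type*} [RCLike 𝕜] [NormedAddCommGroup E] [InnerProductSpace 𝕜 E]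

def cesaroMean (y : ℕ → E) (n : ℕ) : E := ((n : 𝕜) + 1)⁻¹ • ∑ i ∈ range (n + 1), y i

local notation "⟪" x ", " y "⟫" => inner 𝕜 x y

variable {𝕜}

lemma inner_cesaroMean_left {y : ℕ → E} {u : E} {c : 𝕜} (h : ∀ i, ⟪y i, u⟫ = c) (n : ℕ) :
    ⟪cesaroMean 𝕜 y n, u⟫ = c := by
  have : ((n : 𝕜) + 1) ≠ 0 := by exact_mod_cast n.succ_ne_zero
  simp only [cesaroMean, inner_smul_left, sum_inner, h, sum_const, card_range, nsmul_eq_mul,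
    map_inv₀, map_add, map_natCast, map_one]
  push_cast
  field_simp

lemma inner_cesaroMean_cesaroMean {y : ℕ → E} {W d : 𝕜}
    (h : ∀ i k, ⟪y i, y k⟫ = if i = k then W else d) (a b : ℕ) :
    ⟪cesaroMean 𝕜 y a, cesaroMean 𝕜 y b⟫ = d + ((max a b : ℕ) + 1 : 𝕜)⁻¹ * (W - d) := by
  have hsum : ∑ i ∈ range (a + 1), ∑ k ∈ range (b + 1), ⟪y i, y k⟫ =
      ((a : 𝕜) + 1) * ((b : 𝕜) + 1) * d + ((min a b : ℕ) + 1 : 𝕜) * (W - d) := by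
    have hrow : ∀ i, ∑ k ∈ range (b + 1), ⟪y i, y k⟫ =
        ((b : 𝕜) + 1) * d + if i ∈ range (b + 1) then W - d else 0 := by
      intro i
      simp_rw [h, show ∀ k, (if i = k then W else d) = d + if i = k then W - d else 0 by
        intro k; split_ifs <;> ring]
      rw [sum_add_distrib, sum_const, card_range, sum_ite_eq, nsmul_eq_mul]
      push_cast; ring
    simp_rw [hrow, sum_add_distrib, sum_ite_mem, range_inter_range, sum_const, card_range,
      nsmul_eq_mul, Nat.add_min_add_right]
    push_cast; ring
  have ha : ((a : 𝕜) + 1) ≠ 0 := by exact_mod_cast a.succ_ne_zero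
  have hb : ((b : 𝕜) + 1) ≠ 0 := by exact_mod_cast b.succ_ne_zero
  rw [cesaroMean, cesaroMean, inner_smul_left, inner_smul_right, sum_inner]
  simp_rw [inner_sum]
  rw [hsum, map_inv₀, map_add, map_natCast, map_one]
  rcases le_total a b with hab | hab
  · rw [max_eq_right hab, min_eq_left hab]; field_simp
  · rw [max_eq_left hab, min_eq_right hab]; field_simp

lemma norm_cesaroMean_sub_sq_le {y : ℕ → E} {W d : 𝕜}
    (h : ∀ i k, ⟪y i, y k⟫ = if i = k then W else d) {a b : ℕ} (hab : a ≤ b) :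
    ‖cesaroMean 𝕜 y a - cesaroMean 𝕜 y b‖ ^ 2 ≤ ‖W - d‖ * ((a : ℝ) + 1)⁻¹ := by
  have hinner : ⟪cesaroMean 𝕜 y a - cesaroMean 𝕜 y b, cesaroMean 𝕜 y a - cesaroMean 𝕜 y b⟫ =
      (((((a : ℝ) + 1)⁻¹ - ((b : ℝ) + 1)⁻¹ : ℝ)) : 𝕜) * (W - d) := by
    simp only [inner_sub_left, inner_sub_right, inner_cesaroMean_cesaroMean h, max_self,
      max_eq_right hab, max_eq_left hab]
    push_cast; ring
  have hba : ((b : ℝ) + 1)⁻¹ ≤ ((a : ℝ) + 1)⁻¹ := by gcongr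
  rw [norm_sq_eq_re_inner (𝕜 := 𝕜), inner_self_re_eq_norm, hinner, norm_mul, RCLike.norm_ofReal,
    abs_of_nonneg (sub_nonneg.mpr hba), mul_comm]
  gcongr
  linarith [inv_nonneg.mpr (by positivity : (0 : ℝ) ≤ (b : ℝ) + 1)]

lemma cauchySeq_cesaroMean {y : ℕ → E} {W d : 𝕜}
    (h : ∀ i k, ⟪y i, y k⟫ = if i = k then W else d) : CauchySeq (cesaroMean 𝕜 y) := by
  refine cauchySeq_of_le_tendsto_0' (fun n ↦ √(‖W - d‖ * ((n : ℝ) + 1)⁻¹)) (fun a b hab ↦ ?_) ?_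
  · rw [dist_eq_norm]
    exact Real.le_sqrt_of_sq_le (norm_cesaroMean_sub_sq_le h hab)
  · have := ((tendsto_one_div_add_atTop_nhds_zero_nat (𝕜 := ℝ)).const_mul ‖W - d‖).sqrt
    simpa using this

lemma inner_eq_of_tendsto_cesaroMean {y : ℕ → E} {x u : E} {c : 𝕜}
    (hx : Tendsto (cesaroMean 𝕜 y) atTop (𝓝 x)) (h : ∀ i, ⟪y i, u⟫ = c) : ⟪x, u⟫ = c := by
  have hlim := hx.inner (𝕜 := 𝕜) (tendsto_const_nhds (x := u))
  simp only [inner_cesaroMean_left h] at hlim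
  exact tendsto_nhds_unique hlim tendsto_const_nhds

lemma tendsto_cesaroMean_zero {z : ℕ → E} (hz : ∀ᶠ i in atTop, z i = 0) :
    Tendsto (cesaroMean 𝕜 z) atTop (𝓝 0) := by
  obtain ⟨s, hs⟩ := eventually_atTop.mp hz
  have hsum : ∀ n, s ≤ n + 1 → ∑ i ∈ range (n + 1), z i = ∑ i ∈ range s, z i := fun n hn ↦
    (sum_subset (range_subset_range.mpr hn) fun i hi hi' ↦
      hs i (by simpa using hi')).symm
  have hlim : Tendsto (fun n : ℕ ↦ ((n : 𝕜) + 1)⁻¹ • ∑ i ∈ range s, z i) atTop (𝓝 0) := by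
    simpa using (tendsto_one_div_add_atTop_nhds_zero_nat (𝕜 := 𝕜)).smul_const
      (∑ i ∈ range s, z i)
  refine hlim.congr' (eventually_atTop.mpr ⟨s, fun n hn ↦ ?_⟩)
  rw [cesaroMean, hsum n (by omega)]

lemma map_eq_self_of_tendsto_cesaroMean {F : Type*} [FunLike F E E]
    [ContinuousLinearMapClass F 𝕜 E E] (f : F) {y : ℕ → E} {x : E}
    (hx : Tendsto (cesaroMean 𝕜 y) atTop (𝓝 x)) (hf : ∀ᶠ i in atTop, f (y i) = y i) :
    f x = x := by
  have hmean : ∀ n, cesaroMean 𝕜 (fun i ↦ f (y i) - y i) n =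
      f (cesaroMean 𝕜 y n) - cesaroMean 𝕜 y n := by
    intro n
    simp only [cesaroMean, map_smul, map_sum, sum_sub_distrib, smul_sub]
  have hlim := tendsto_cesaroMean_zero (𝕜 := 𝕜) (hf.mono fun i hi ↦ sub_eq_zero.mpr hi)
  rw [funext hmean] at hlim
  have := ((map_continuous f).tendsto x |>.comp hx).sub hx
  exact sub_eq_zero.mp (tendsto_nhds_unique this hlim)

end Cesaro

section Projection

variable {𝕜 E : Type*} [RCLike 𝕜] [NormedAddCommGroup E] [InnerProductSpace 𝕜 E]
  {S : Submodule 𝕜 E} {Q : E → E}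

local notation "⟪" x ", " y "⟫" => inner 𝕜 x y

lemma apply_eq_of_inner_sub_eq_zero (hQmem : ∀ v, Q v ∈ S)
    (hQorth : ∀ v, ∀ z ∈ S, ⟪v - Q v, z⟫ = 0) {a b : E} (hb : b ∈ S)
    (hab : ∀ z ∈ S, ⟪a - b, z⟫ = 0) : Q a = b := by
  have hd : Q a - b ∈ S := S.sub_mem (hQmem a) hb
  have hzero : ⟪(a - b) - (a - Q a), Q a - b⟫ = 0 := by
    rw [inner_sub_left, hab _ hd, hQorth a _ hd, sub_zero]
  rw [sub_sub_sub_cancel_left] at hzero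
  exact sub_eq_zero.mp (inner_self_eq_zero.mp hzero)

lemma apply_eq_apply_of_inner_sub_eq_zero (hQmem : ∀ v, Q v ∈ S)
    (hQorth : ∀ v, ∀ z ∈ S, ⟪v - Q v, z⟫ = 0) {a b : E} (hab : ∀ z ∈ S, ⟪a - b, z⟫ = 0) :
    Q a = Q b :=
  apply_eq_of_inner_sub_eq_zero hQmem hQorth (hQmem b) fun z hz ↦ by
    rw [← sub_add_sub_cancel a b (Q b), inner_add_left, hab z hz, hQorth b z hz, add_zero]

end Projection

lemma exists_forall_ge_apply_eq_of_mem_Sinf {g : Perm ℕ} (hg : g ∈ Sinf) :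
    ∃ s, ∀ x, s ≤ x → g x = x := by
  obtain ⟨b, hb⟩ := Set.Finite.bddAbove (show {x | g x ≠ x}.Finite from hg)
  exact ⟨b + 1, fun x hx ↦ by_contra fun h ↦ absurd (hb h) (by omega)⟩

lemma swap_mem_Sinf (a b : ℕ) : swap a b ∈ Sinf :=
  ((Set.finite_singleton b).insert a).subset fun x hx ↦ by
    by_contra hab
    simp only [Set.mem_insert_iff, Set.mem_singleton_iff, not_or] at hab
    exact hx (swap_apply_of_ne_of_ne hab.1 hab.2)

lemma le_apply_of_mem_fixLt {g : Perm ℕ} {m x : ℕ} (hg : g ∈ fixLt m) (hx : m ≤ x) :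
    m ≤ g x := by
  by_contra h
  have := g.injective (hg _ (not_le.mp h))
  omega

lemma exists_mem_Sinf_fixLt_eqOn (m : ℕ) (f : ℕ → ℕ) (s : Finset ℕ) (hs : ∀ x ∈ s, m ≤ x)
    (hf : ∀ x ∈ s, m ≤ f x) (hinj : Set.InjOn f s) :
    ∃ h ∈ Sinf ⊓ fixLt m, ∀ x ∈ s, h x = f x := by
  induction s using Finset.induction_on with
  | empty => exact ⟨1, one_mem _, by simp⟩
  | @insert a s ha ih =>
    simp only [mem_insert, forall_eq_or_imp, coe_insert, Set.injOn_insert ha] at hs hf hinj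
    obtain ⟨h, ⟨hS, hfix⟩, hext⟩ := ih hs.2 hf.2 hinj.1
    refine ⟨swap (h a) (f a) * h, ⟨mul_mem (swap_mem_Sinf _ _) hS, fun i hi ↦ ?_⟩, ?_⟩
    · have := le_apply_of_mem_fixLt hfix hs.1
      rw [Perm.mul_apply, hfix i hi, swap_apply_of_ne_of_ne (by omega) (by omega)]
    · simp only [mem_insert, forall_eq_or_imp, Perm.mul_apply, swap_apply_left, true_and]
      intro x hx
      rw [hext x hx, swap_apply_of_ne_of_ne]
      · rw [← hext x hx]
        exact fun hxa ↦ ha (h.injective hxa ▸ hx)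
      · exact fun hxa ↦ hinj.2 ⟨x, hx, hxa⟩

lemma exists_eq_mul_mul_of_agree (m : ℕ) {g g' : Perm ℕ} (hg : g ∈ Sinf) (hg' : g' ∈ Sinf)
    (hagree : ∀ x < m, (g x < m ∨ g' x < m) → g x = g' x) :
    ∃ h₁ ∈ Sinf ⊓ fixLt m, ∃ h₂ ∈ Sinf ⊓ fixLt m, g' = h₁ * g * h₂ := by
  set s := ((range m).filter fun x ↦ m ≤ g x).image g
  have hs : ∀ y ∈ s, m ≤ y := by
    simp only [s, mem_image, mem_filter]
    rintro _ ⟨x, ⟨-, hx⟩, rfl⟩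
    exact hx
  have hf : ∀ y ∈ s, m ≤ g' (g⁻¹ y) := by
    simp only [s, mem_image, mem_filter, mem_range]
    rintro _ ⟨x, ⟨hxm, hx⟩, rfl⟩
    rw [Perm.coe_inv, symm_apply_apply]
    by_contra h
    have := hagree x hxm (Or.inr (not_le.mp h))
    omega
  obtain ⟨h₁, ⟨h₁S, h₁fix⟩, hext⟩ := exists_mem_Sinf_fixLt_eqOn m (fun y ↦ g' (g⁻¹ y)) s hs hf
    (g'.injective.comp g⁻¹.injective).injOn
  have hh₁ : ∀ x < m, h₁ (g x) = g' x := by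
    intro x hx
    by_cases hgx : m ≤ g x
    · rw [hext _ (mem_image_of_mem g (mem_filter.mpr ⟨mem_range.mpr hx, hgx⟩)),
        Perm.coe_inv, symm_apply_apply]
    · rw [h₁fix _ (not_le.mp hgx)]
      exact hagree x hx (Or.inl (not_le.mp hgx))
  refine ⟨h₁, ⟨h₁S, h₁fix⟩, g⁻¹ * h₁⁻¹ * g', ⟨?_, fun i hi ↦ ?_⟩, by group⟩
  · exact Sinf.mul_mem (Sinf.mul_mem (Sinf.inv_mem hg) (Sinf.inv_mem h₁S)) hg'
  · simp only [Perm.mul_apply, ← hh₁ i hi, Perm.coe_inv, symm_apply_apply]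

@[simp]
lemma theta_apply (β j x : ℕ) : theta β j x = thetaFun β j x := rfl

lemma theta_mul_self (β j : ℕ) : theta β j * theta β j = 1 :=
  Perm.ext (thetaFun_invol β j)

lemma theta_mem_fixLt {β j m : ℕ} (hm : m ≤ β) : theta β j ∈ fixLt m := fun i hi ↦ by
  simp only [theta_apply, thetaFun]
  split_ifs <;> omega

lemma theta_agree {β j j' m : ℕ} (hj : m + 1 ≤ j) (hj' : m + 1 ≤ j') :
    ∀ x < m, (theta β j x < m ∨ theta β j' x < m) → theta β j x = theta β j' x := by
  intro x hx h
  simp only [theta_apply, thetaFun] at h ⊢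
  split_ifs at h ⊢ <;> omega

lemma theta_mul_theta_agree {β a b j m : ℕ} (ha : m + 1 ≤ a) (hb : m + 1 ≤ b) (hj : m + 1 ≤ j)
    (hab : 2 * a + m + 1 ≤ b ∨ 2 * b + m + 1 ≤ a) :
    ∀ x < m, (theta β j x < m ∨ (theta β a * theta β b) x < m) →
      theta β j x = (theta β a * theta β b) x := by
  intro x hx h
  simp only [Perm.mul_apply, theta_apply, thetaFun] at h ⊢
  split_ifs at h ⊢ <;> omega

lemma theta_mul_mul_theta_mem_fixLt {β j : ℕ} {h : Perm ℕ} (hβ : h ∈ fixLt β)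
    (hj : ∀ x, β + j ≤ x → h x = x) : theta β j * h * theta β j ∈ fixLt (β + j) := by
  intro x hx
  simp only [Perm.mul_apply, theta_apply]
  by_cases hxβ : x < β
  · have hθ : thetaFun β j x = x := by simp only [thetaFun]; split_ifs <;> omega
    rw [hθ, hβ x hxβ, hθ]
  · have hθ : thetaFun β j x = x + j := by simp only [thetaFun]; split_ifs <;> omega
    rw [hθ, hj _ (by omega)]
    simp only [thetaFun]
    split_ifs <;> omega

/-- Indices growing fast enough that `θ_a[β] θ_b[β]` acts below `m` like a single `θ`. -/
def sepSeq (m : ℕ) : ℕ → ℕ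
  | 0 => m + 1
  | i + 1 => 2 * sepSeq m i + m + 1

lemma add_le_sepSeq (m i : ℕ) : m + 1 + i ≤ sepSeq m i := by
  induction i with
  | zero => simp [sepSeq]
  | succ i ih => rw [sepSeq]; omega

lemma strictMono_sepSeq (m : ℕ) : StrictMono (sepSeq m) :=
  strictMono_nat_of_lt_succ fun i ↦ by rw [sepSeq]; have := add_le_sepSeq m i; omega

lemma sepSeq_separated (m : ℕ) {i k : ℕ} (hik : i < k) :
    2 * sepSeq m i + m + 1 ≤ sepSeq m k :=
  (strictMono_sepSeq m).monotone (Nat.succ_le_of_lt hik)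

section Representation

variable {𝕜 V : Type*} [RCLike 𝕜] [NormedAddCommGroup V] [InnerProductSpace 𝕜 V]

local notation "⟪" x ", " y "⟫" => inner 𝕜 x y

lemma LinearIsometryEquiv.inner_map_left_eq_of_apply_eq {e : V ≃ₗᵢ[𝕜] V} {u : V} (hu : e u = u)
    (x : V) : ⟪e x, u⟫ = ⟪x, u⟫ := by
  rw [← e.inner_map_map x u, hu]

lemma map_mul_apply {G : Type*} [Monoid G] {π : G →* (V ≃ₗᵢ[𝕜] V)} (g h : G) (v : V) :
    π (g * h) v = π g (π h v) := by
  rw [map_mul, LinearIsometryEquiv.coe_mul, Function.comp_apply]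

variable (π : ↥Sinf →* (V ≃ₗᵢ[𝕜] V))

/-- `V[m]`, when `π` is the restriction of a representation of `G` to the diagonal. -/
def invariantsFixLt (m : ℕ) : Set V :=
  {v | ∀ h : ↥Sinf, (h : Perm ℕ) ∈ fixLt m → π h v = v}

def thetaS (β j : ℕ) : ↥Sinf := ⟨theta β j, theta_mem_Sinf β j⟩

variable {π}

lemma inner_map_eq_of_agree {m : ℕ} {w u : V} (hw : w ∈ invariantsFixLt π m)
    (hu : u ∈ invariantsFixLt π m) {g g' : ↥Sinf}
    (hagree : ∀ x < m, ((g : Perm ℕ) x < m ∨ (g' : Perm ℕ) x < m) →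
      (g : Perm ℕ) x = (g' : Perm ℕ) x) :
    ⟪π g' w, u⟫ = ⟪π g w, u⟫ := by
  obtain ⟨h₁, hh₁, h₂, hh₂, hg'⟩ := exists_eq_mul_mul_of_agree m g.2 g'.2 hagree
  have hg' : g' = ⟨h₁, hh₁.1⟩ * g * ⟨h₂, hh₂.1⟩ := Subtype.ext hg'
  rw [hg', map_mul_apply, map_mul_apply, hw _ hh₂.2,
    LinearIsometryEquiv.inner_map_left_eq_of_apply_eq (hu _ hh₁.2)]

lemma inner_map_thetaS_eq {m β j j' : ℕ} {w u : V} (hw : w ∈ invariantsFixLt π m)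
    (hu : u ∈ invariantsFixLt π m) (hj : m + 1 ≤ j) (hj' : m + 1 ≤ j') :
    ⟪π (thetaS β j) w, u⟫ = ⟪π (thetaS β j') w, u⟫ :=
  inner_map_eq_of_agree hw hu (theta_agree hj' hj)

lemma inner_map_thetaS_map_thetaS {m β a b : ℕ} {w : V} (hw : w ∈ invariantsFixLt π m)
    (ha : m + 1 ≤ a) (hb : m + 1 ≤ b) (hab : 2 * a + m + 1 ≤ b ∨ 2 * b + m + 1 ≤ a) :
    ⟪π (thetaS β a) w, π (thetaS β b) w⟫ = ⟪π (thetaS β (m + 1)) w, w⟫ := by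
  have hθ : thetaS β b * thetaS β b = 1 := Subtype.ext (theta_mul_self β b)
  rw [← (π (thetaS β b)).inner_map_map, ← map_mul_apply, ← map_mul_apply, hθ, map_one,
    LinearIsometryEquiv.coe_one, id]
  exact inner_map_eq_of_agree hw hw (theta_mul_theta_agree hb ha le_rfl (Or.comm.mp hab))

lemma inner_map_thetaS_of_mem {β j : ℕ} {z : V} (hz : z ∈ invariantsFixLt π β) (w : V) :
    ⟪π (thetaS β j) w, z⟫ = ⟪w, z⟫ :=
  LinearIsometryEquiv.inner_map_left_eq_of_apply_eq (hz _ (theta_mem_fixLt le_rfl)) w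

lemma map_map_thetaS_eq {m β j : ℕ} {w : V} (hw : w ∈ invariantsFixLt π m) (hm : m ≤ β + j)
    {h : ↥Sinf} (hβ : (h : Perm ℕ) ∈ fixLt β) (hj : ∀ x, β + j ≤ x → (h : Perm ℕ) x = x) :
    π h (π (thetaS β j) w) = π (thetaS β j) w := by
  set h' : ↥Sinf := thetaS β j * h * thetaS β j
  have hθ : thetaS β j * thetaS β j = 1 := Subtype.ext (theta_mul_self β j)
  have hh' : h * thetaS β j = thetaS β j * h' := by
    simp only [h', ← mul_assoc, hθ, one_mul]
  have hfix : (h' : Perm ℕ) ∈ fixLt m := fun x hx ↦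
    theta_mul_mul_theta_mem_fixLt hβ hj x (by omega)
  rw [← map_mul_apply, hh', map_mul_apply, hw h' hfix]

lemma exists_inner_map_thetaS_eq [CompleteSpace V] {m β : ℕ} {w : V}
    (hw : w ∈ invariantsFixLt π m) :
    ∃ x ∈ invariantsFixLt π β, (∀ z ∈ invariantsFixLt π β, ⟪x - w, z⟫ = 0) ∧
      ∀ j, m + 1 ≤ j → ∀ u ∈ invariantsFixLt π m, ⟪π (thetaS β j) w, u⟫ = ⟪x, u⟫ := by
  set y : ℕ → V := fun i ↦ π (thetaS β (sepSeq m i)) w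
  have hm : ∀ i, m + 1 ≤ sepSeq m i := fun i ↦ (Nat.le_add_right _ _).trans (add_le_sepSeq m i)
  have hy : ∀ i k, ⟪y i, y k⟫ = if i = k then ⟪w, w⟫ else ⟪π (thetaS β (m + 1)) w, w⟫ := by
    intro i k
    split_ifs with hik
    · rw [hik]
      exact LinearIsometryEquiv.inner_map_map _ _ _
    · refine inner_map_thetaS_map_thetaS hw (hm i) (hm k) ?_
      rcases Nat.lt_or_gt_of_ne hik with h | h
      · exact Or.inl (sepSeq_separated m h)
      · exact Or.inr (sepSeq_separated m h)
  obtain ⟨x, hx⟩ := cauchySeq_tendsto_of_complete (cauchySeq_cesaroMean hy)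
  refine ⟨x, fun h hh ↦ ?_, fun z hz ↦ ?_, fun j hj u hu ↦ ?_⟩
  · obtain ⟨s, hs⟩ := exists_forall_ge_apply_eq_of_mem_Sinf h.2
    refine map_eq_self_of_tendsto_cesaroMean (π h) hx (eventually_atTop.mpr ⟨s, fun i hi ↦ ?_⟩)
    have := add_le_sepSeq m i
    exact map_map_thetaS_eq hw (by omega) hh fun x hx ↦ hs x (by omega)
  · rw [inner_sub_left, inner_eq_of_tendsto_cesaroMean hx fun i ↦ inner_map_thetaS_of_mem hz w,
      sub_self]
  · exact (inner_eq_of_tendsto_cesaroMean hx fun i ↦ inner_map_thetaS_eq hw hu (hm i) hj).symm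

end Representation

lemma fixLt_antitone : Antitone fixLt := fun _ _ hnm _ hg i hi ↦ hg i (hi.trans_le hnm)

lemma KK_antitone : Antitone KK := fun _ _ hnm ↦
  Subgroup.map_mono (inf_le_inf_left _ (fixLt_antitone hnm))

lemma exists_forall_ge_apply_eq_of_mem_Ggrp {g : P3} (hg : g ∈ Ggrp) :
    ∃ s, ∀ x, s ≤ x → g.1 x = x ∧ g.2.1 x = x ∧ g.2.2 x = x := by
  obtain ⟨s₁, h₁⟩ := exists_forall_ge_apply_eq_of_mem_Sinf hg.1
  obtain ⟨s₂, h₂⟩ := exists_forall_ge_apply_eq_of_mem_Sinf hg.2.1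
  obtain ⟨s₃, h₃⟩ := exists_forall_ge_apply_eq_of_mem_Sinf hg.2.2
  exact ⟨s₁ + s₂ + s₃, fun x hx ↦ ⟨h₁ x (by omega), h₂ x (by omega), h₃ x (by omega)⟩⟩

lemma commute_of_mem_KK {m : ℕ} {k g : P3} (hk : k ∈ KK m)
    (hg : ∀ x, m ≤ x → g.1 x = x ∧ g.2.1 x = x ∧ g.2.2 x = x) : Commute k g := by
  obtain ⟨h, ⟨-, hh⟩, rfl⟩ := hk
  have hcomm : ∀ f : Perm ℕ, (∀ x, m ≤ x → f x = x) → Commute h f := fun f hf ↦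
    Perm.Disjoint.commute fun x ↦ (lt_or_ge x m).imp (hh x) (hf x)
  exact Prod.commute_iff.mpr ⟨hcomm _ fun x hx ↦ (hg x hx).1,
    Prod.commute_iff.mpr ⟨hcomm _ fun x hx ↦ (hg x hx).2.1, hcomm _ fun x hx ↦ (hg x hx).2.2⟩⟩

def diagG : ↥Sinf →* ↥Ggrp := (diag3.comp Sinf.subtype).codRestrict Ggrp fun h ↦ ⟨h.2, h.2, h.2⟩

section

variable {V : Type*} [NormedAddCommGroup V] [InnerProductSpace ℂ V] [CompleteSpace V]

/-- `V[α]`: the subspace of vectors fixed by `ρ(k)` for all `k ∈ K[α]`. -/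
def fixedVectors (ρ : ↥Ggrp →* (V ≃ₗᵢ[ℂ] V)) (α : ℕ) : Set V :=
  {v | ∀ k : ↥Ggrp, (k : P3) ∈ KK α → ρ k v = v}

end

section FixedVectors

variable {V : Type*} [NormedAddCommGroup V] [InnerProductSpace ℂ V]
  (ρ : ↥Ggrp →* (V ≃ₗᵢ[ℂ] V))

def fixedSubmodule (α : ℕ) : Submodule ℂ V where
  carrier := fixedVectors ρ α
  zero_mem' _ _ := map_zero _
  add_mem' ha hb k hk := by rw [map_add, ha k hk, hb k hk]
  smul_mem' c _ hv k hk := by rw [map_smul, hv k hk]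

lemma fixedVectors_eq_invariantsFixLt (m : ℕ) :
    fixedVectors ρ m = invariantsFixLt (ρ.comp diagG) m := by
  ext v
  refine ⟨fun hv h hh ↦ hv (diagG h) ⟨h, ⟨h.2, hh⟩, rfl⟩, ?_⟩
  rintro hv k ⟨h, ⟨hS, hh⟩, hk⟩
  obtain rfl : k = diagG ⟨h, hS⟩ := Subtype.ext hk.symm
  exact hv _ hh

variable {ρ}

lemma map_mem_fixedVectors {n m : ℕ} (hnm : n ≤ m) {g : ↥Ggrp}
    (hg : ∀ k ∈ KK m, Commute k (g : P3)) {v : V} (hv : v ∈ fixedVectors ρ n) :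
    ρ g v ∈ fixedVectors ρ m := by
  intro k hk
  rw [← map_mul_apply, (Subtype.ext (hg k hk).eq : k * g = g * k), map_mul_apply,
    hv k (KK_antitone hnm hk)]

end FixedVectors

section

variable {V : Type*} [NormedAddCommGroup V] [InnerProductSpace ℂ V] [CompleteSpace V]

lemma inner_map_diagG_thetaS_eq {ρ : ↥Ggrp →* (V ≃ₗᵢ[ℂ] V)} {β : ℕ} {Q : V → V}
    (hQmem : ∀ v, Q v ∈ fixedVectors ρ β)
    (hQorth : ∀ v w, w ∈ fixedVectors ρ β → inner ℂ (v - Q v) w = 0) {m j : ℕ} (hj : m + 1 ≤ j)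
    {w u : V} (hw : w ∈ fixedVectors ρ m) (hu : u ∈ fixedVectors ρ m) :
    inner ℂ (ρ (diagG (thetaS β j)) w) u = inner ℂ (Q w) u := by
  simp only [fixedVectors_eq_invariantsFixLt] at hw hu
  obtain ⟨x, hxβ, hxw, hx⟩ := exists_inner_map_thetaS_eq hw
  simp only [← fixedVectors_eq_invariantsFixLt] at hxβ hxw
  have hQx : Q w = x := by
    refine apply_eq_of_inner_sub_eq_zero (S := fixedSubmodule ρ β) hQmem hQorth hxβ fun z hz ↦ ?_
    rw [← neg_sub, inner_neg_left, hxw z hz, neg_zero]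
  rw [hQx]
  exact hx j hj u hu

/-- **Multiplicativity theorem.** For a unitary representation `ρ` of
`G = S_∞ × S_∞ × S_∞` on a complex Hilbert space `V`, and for all `α, β, γ` and
`p, q ∈ G`, for large `j` and every `v ∈ V[γ]`:
`P[α] ρ(p) P[β] ρ(q) v = P[α] ρ(p·Θ_j[β]·q) v`.
Here `P : ℕ → V → V` is the orthogonal projection onto `V[α]`, characterized by
`P α v ∈ V[α]` and `v - P α v ⟂ V[α]`. -/
theorem multiplicativity
    (ρ : ↥Ggrp →* (V ≃ₗᵢ[ℂ] V)) (P : ℕ → V → V)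
    (hPmem : ∀ (α : ℕ) (v : V), P α v ∈ fixedVectors ρ α)
    (hPorth : ∀ (α : ℕ) (v w : V), w ∈ fixedVectors ρ α → (inner ℂ (v - P α v) w : ℂ) = 0)
    (α β γ : ℕ) (p q : P3) (hp : p ∈ Ggrp) (hq : q ∈ Ggrp) :
    ∃ N : ℕ, ∀ j : ℕ, N ≤ j → ∀ v ∈ fixedVectors ρ γ,
      P α (ρ ⟨p, hp⟩ (P β (ρ ⟨q, hq⟩ v))) =
        P α (ρ ⟨p * ThetaP β j * q, mul_mem (mul_mem hp (Theta_mem_G β j)) hq⟩ v) := by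
  obtain ⟨sp, hsp⟩ := exists_forall_ge_apply_eq_of_mem_Ggrp hp
  obtain ⟨sq, hsq⟩ := exists_forall_ge_apply_eq_of_mem_Ggrp hq
  set m := α + γ + sp + sq
  refine ⟨m + 1, fun j hj v hv ↦ ?_⟩
  have hw : ρ ⟨q, hq⟩ v ∈ fixedVectors ρ m := map_mem_fixedVectors (by omega)
    (fun k hk ↦ commute_of_mem_KK hk fun x hx ↦ hsq x (by omega)) hv
  have hsplit : (⟨p * ThetaP β j * q, mul_mem (mul_mem hp (Theta_mem_G β j)) hq⟩ : ↥Ggrp) =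
      ⟨p, hp⟩ * diagG (thetaS β j) * ⟨q, hq⟩ := rfl
  rw [hsplit, map_mul_apply, map_mul_apply]
  refine apply_eq_apply_of_inner_sub_eq_zero (S := fixedSubmodule ρ α) (hPmem α) (hPorth α)
    fun z hz ↦ ?_
  have hu : (ρ ⟨p, hp⟩).symm z ∈ fixedVectors ρ m := by
    rw [← LinearIsometryEquiv.coe_inv, ← map_inv]
    exact map_mem_fixedVectors (by omega)
      (fun k hk ↦ (commute_of_mem_KK hk fun x hx ↦ hsp x (by omega)).inv_right) hz
  rw [← map_sub, LinearIsometryEquiv.inner_map_eq_flip, inner_sub_left,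
    inner_map_diagG_thetaS_eq (hPmem β) (hPorth β) hj hw hu, sub_self]

end
end

section
/- Let ρ be a unitary representation of S_∞ on a complex Hilbert space V which is irreducible in the sense that the only closed subspaces of V invariant under ρ(g) for all g ∈ S_∞ are {0} and V. Then ρ admits a continuous extension to the full symmetric group Perm(ℕ) if and only if V[α] ≠ {0} for some α ∈ ℕ. Here a continuous extension means a group homomorphism ρ̄ from Perm(ℕ) to the unitary automorphisms of V such that ρ̄(g) = ρ(g) for all g ∈ S_∞ and such that for every v ∈ V and every ε > 0 there exists α ∈ ℕ with ‖ρ̄(h)v − v‖ < ε for every h ∈ Perm(ℕ) fixing each of the points 0,1,…,α−1. -/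
section

variable {V : Type*} [NormedAddCommGroup V] [InnerProductSpace ℂ V] [CompleteSpace V]

/-- `V[α]`: the closed subspace of vectors fixed by `ρ(h)` for every finitely supported
permutation `h` fixing the points `0, 1, …, α-1`. -/
def fixedVectorsS (ρ : ↥Sinf →* (V ≃ₗᵢ[ℂ] V)) (α : ℕ) : Set V :=
  {v | ∀ h : ↥Sinf, (∀ i < α, (h : Equiv.Perm ℕ) i = i) → ρ h v = v}

/-- `ρ̄ : Perm(ℕ) → U(V)` is a continuous extension of `ρ : S_∞ → U(V)`:
it extends `ρ` and is continuous in the topology of pointwise convergence, i.e. for each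
`v ∈ V` and `ε > 0` there is `α` with `‖ρ̄(h)v - v‖ < ε` for every `h` fixing `0,…,α-1`. -/
def IsContinuousExtension (ρ : ↥Sinf →* (V ≃ₗᵢ[ℂ] V))
    (ρb : Equiv.Perm ℕ →* (V ≃ₗᵢ[ℂ] V)) : Prop :=
  (∀ g : ↥Sinf, ρb (g : Equiv.Perm ℕ) = ρ g) ∧
    ∀ v : V, ∀ ε : ℝ, 0 < ε → ∃ α : ℕ, ∀ h : Equiv.Perm ℕ,
      (∀ i < α, h i = i) → ‖ρb h v - v‖ < ε

end

/-!
If `ρ̄` is continuous, pick `v ≠ 0` and `α` such that the stabiliser `H` of `0, …, α - 1` moves `v`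
by less than `‖v‖ / 2`. The closed convex hull of `ρ(H) v` then avoids `0`, and its point of
minimal norm, being unique, is fixed by `ρ(H)`.

Conversely, for `0 ≠ v ∈ V[α]` the vector `ρ(k) v` only depends on `k` restricted to
`0, …, α - 1`, so `ψ(p) = ρ(k) v` (`k` finitary, agreeing with `p` there) is defined for every
`p ∈ Perm(ℕ)`. By irreducibility the `ψ(p)` span a dense subspace, and `ψ(p) ↦ ψ(g p)` extends to
an isometry of it, because on finitely many `p` the permutation `g` acts like a finitary one.
Extending by continuity gives `ρ̄`, which is continuous since each vector of the dense subspace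
is fixed by a pointwise stabiliser.
-/

open Set

section FixedVector

theorem Convex.eq_of_isMinOn_norm {E : Type*} [NormedAddCommGroup E] [NormedSpace ℝ E]
    [StrictConvexSpace ℝ E] {C : Set E} (hC : Convex ℝ C) {u u' : E} (hu : u ∈ C) (hu' : u' ∈ C)
    (hmin : IsMinOn (fun x => ‖x‖) C u) (hnorm : ‖u'‖ = ‖u‖) : u' = u := by
  by_contra hne
  have hmid : (1 / 2 : ℝ) • (u' + u) ∈ C := by
    rw [smul_add]; exact hC hu' hu (by norm_num) (by norm_num) (by norm_num)
  have := (norm_midpoint_lt_iff hnorm).2 hne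
  exact (hmin hmid).not_gt (hnorm ▸ this)

theorem IsClosed.exists_mem_forall_isFixedPt {E : Type*} [NormedAddCommGroup E]
    [InnerProductSpace ℝ E] [CompleteSpace E] {C : Set E} (hclosed : IsClosed C)
    (hconv : Convex ℝ C) (hne : C.Nonempty) :
    ∃ u ∈ C, ∀ f : E → E, (∀ x, ‖f x‖ = ‖x‖) → MapsTo f C C → Function.IsFixedPt f u := by
  obtain ⟨u, huC, hu⟩ := exists_norm_eq_iInf_of_complete_convex hne hclosed.isComplete hconv 0
  have hmin : IsMinOn (fun x => ‖x‖) C u := fun x hx => by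
    have := ciInf_le ⟨0, forall_mem_range.2 fun w : C => norm_nonneg ((0 : E) - w)⟩ (⟨x, hx⟩ : C)
    simp only [zero_sub, norm_neg] at hu this
    exact hu.trans_le this
  exact ⟨u, huC, fun f hf hmaps => hconv.eq_of_isMinOn_norm huC (hmaps huC) hmin (hf u)⟩

theorem exists_ne_zero_forall_mem_apply_eq {V G : Type*} [NormedAddCommGroup V]
    [InnerProductSpace ℂ V] [CompleteSpace V] [Monoid G] (ρ : G →* (V ≃ₗᵢ[ℂ] V))
    (H : Submonoid G) {v : V} {r : ℝ} (hr : r < ‖v‖) (hv : ∀ g ∈ H, ‖ρ g v - v‖ ≤ r) :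
    ∃ u ≠ 0, ∀ g ∈ H, ρ g u = u := by
  let _ : InnerProductSpace ℝ V := InnerProductSpace.complexToReal
  set O := range fun g : H => ρ g v
  set C := closure (convexHull ℝ O)
  have hCball : C ⊆ Metric.closedBall v r := by
    refine closure_minimal (convexHull_min ?_ (convex_closedBall v r)) Metric.isClosed_closedBall
    rintro _ ⟨g, rfl⟩
    simpa [dist_eq_norm] using hv g g.2
  have hvC : v ∈ C := subset_closure <| subset_convexHull ℝ O ⟨1, by simp⟩
  obtain ⟨u, huC, hu⟩ :=
    isClosed_closure.exists_mem_forall_isFixedPt (convex_convexHull ℝ O).closure ⟨v, hvC⟩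
  refine ⟨u, ?_, fun g hg => hu (ρ g) (ρ g).norm_map ?_⟩
  · rintro rfl
    have := hCball huC
    rw [Metric.mem_closedBall, dist_zero_left] at this
    linarith
  · let L : V →L[ℝ] V := ((ρ g : V →L[ℂ] V)).restrictScalars ℝ
    have hO : MapsTo L O O := by
      rintro _ ⟨k, rfl⟩
      exact ⟨⟨g, hg⟩ * k, by simp [L]⟩
    refine MapsTo.closure (convexHull_min (fun x hx => subset_convexHull ℝ O (hO hx)) ?_)
      L.continuous
    exact (convex_convexHull ℝ O).linear_preimage L.toLinearMap

end FixedVector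

section Extension

open Finsupp

variable {𝕜 G X V : Type*} [NormedField 𝕜] [NormedAddCommGroup V] [NormedSpace 𝕜 V]
  [Group G] [MulAction G X] {S : Subgroup G} {ρ : S →* (V ≃ₗᵢ[𝕜] V)} {ψ : X → V}

variable (hψ : ∀ (k : S) (x : X), ψ ((k : G) • x) = ρ k (ψ x))
  (happrox : ∀ (g : G) (s : Finset X), ∃ k : S, ∀ x ∈ s, ψ (g • x) = ψ ((k : G) • x))
  (hdense : Dense (Submodule.span 𝕜 (range ψ) : Set V))

include hψ happrox in
theorem exists_linearCombination_smul_eq (g : G) (c : X →₀ 𝕜) :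
    ∃ k : S, linearCombination 𝕜 (fun x => ψ (g • x)) c = ρ k (linearCombination 𝕜 ψ c) := by
  obtain ⟨k, hk⟩ := happrox g c.support
  refine ⟨k, ?_⟩
  have := Finsupp.apply_linearCombination 𝕜 (ρ k).toLinearEquiv.toLinearMap ψ c
  simp only [LinearEquiv.coe_coe, LinearIsometryEquiv.coe_toLinearEquiv] at this
  rw [this, linearCombination_apply, linearCombination_apply]
  exact Finsupp.sum_congr fun x hx => by simp [hk x hx, hψ]

include hdense in
theorem denseRange_linearCombination : DenseRange (linearCombination 𝕜 ψ) := by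
  rwa [DenseRange, ← LinearMap.coe_range, range_linearCombination]

variable [CompleteSpace V]

variable (𝕜 ψ) in
/-- `ψ x ↦ ψ (g • x)`, extended linearly and then by continuity (`extendOfNorm` gives junk unless
this is bounded on the span of `ψ`, as it is under the hypotheses below). -/
noncomputable def extensionOp (g : G) : V →L[𝕜] V :=
  (linearCombination 𝕜 fun x => ψ (g • x)).extendOfNorm (linearCombination 𝕜 ψ)

include hψ happrox hdense in
theorem extensionOp_linearCombination (g : G) (c : X →₀ 𝕜) :
    extensionOp 𝕜 ψ g (linearCombination 𝕜 ψ c) = linearCombination 𝕜 (fun x => ψ (g • x)) c := by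
  refine LinearMap.extendOfNorm_eq (f := linearCombination 𝕜 fun x => ψ (g • x))
    (denseRange_linearCombination hdense) ⟨1, fun c => ?_⟩ c
  obtain ⟨k, hk⟩ := exists_linearCombination_smul_eq hψ happrox g c
  rw [hk, LinearIsometryEquiv.norm_map, one_mul]

include hψ happrox hdense in
theorem extensionOp_apply (g : G) (x : X) : extensionOp 𝕜 ψ g (ψ x) = ψ (g • x) := by
  simpa using extensionOp_linearCombination hψ happrox hdense g (single x 1)

include hψ happrox hdense in
theorem norm_extensionOp_apply (g : G) (y : V) : ‖extensionOp 𝕜 ψ g y‖ = ‖y‖ := by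
  refine (denseRange_linearCombination hdense).induction_on y
    (isClosed_eq (by fun_prop) continuous_norm) fun c => ?_
  obtain ⟨k, hk⟩ := exists_linearCombination_smul_eq hψ happrox g c
  rw [extensionOp_linearCombination hψ happrox hdense, hk, LinearIsometryEquiv.norm_map]

include hψ happrox hdense in
theorem extensionOp_mul (g g' : G) :
    extensionOp 𝕜 ψ (g * g') = (extensionOp 𝕜 ψ g).comp (extensionOp 𝕜 ψ g') :=
  ContinuousLinearMap.ext_on hdense fun _ ⟨x, hx⟩ => by
    simp [← hx, extensionOp_apply hψ happrox hdense, mul_smul]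

include hψ happrox hdense in
theorem extensionOp_one : extensionOp 𝕜 ψ (1 : G) = ContinuousLinearMap.id 𝕜 V :=
  ContinuousLinearMap.ext_on hdense fun _ ⟨x, hx⟩ => by
    simp [← hx, extensionOp_apply hψ happrox hdense]

include hψ happrox hdense in
theorem extensionOp_coe (k : S) : extensionOp 𝕜 ψ (k : G) = (ρ k : V →L[𝕜] V) :=
  ContinuousLinearMap.ext_on hdense fun _ ⟨x, hx⟩ => by
    simp [← hx, extensionOp_apply hψ happrox hdense, hψ]

include hψ happrox hdense in
theorem extensionOp_inv_apply_apply (g : G) (y : V) :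
    extensionOp 𝕜 ψ g⁻¹ (extensionOp 𝕜 ψ g y) = y := by
  rw [← ContinuousLinearMap.comp_apply, ← extensionOp_mul hψ happrox hdense, inv_mul_cancel,
    extensionOp_one hψ happrox hdense, ContinuousLinearMap.id_apply]

include hψ happrox hdense in
theorem exists_extension :
    ∃ ρb : G →* (V ≃ₗᵢ[𝕜] V), (∀ k : S, ρb k = ρ k) ∧ ∀ g x, ρb g (ψ x) = ψ (g • x) := by
  let U (g : G) : V ≃ₗᵢ[𝕜] V :=
    { (extensionOp 𝕜 ψ g : V →ₗ[𝕜] V) with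
      invFun := extensionOp 𝕜 ψ g⁻¹
      left_inv := extensionOp_inv_apply_apply hψ happrox hdense g
      right_inv y := by
        simpa using extensionOp_inv_apply_apply hψ happrox hdense g⁻¹ y
      norm_map' := norm_extensionOp_apply hψ happrox hdense g }
  refine ⟨{ toFun := U, map_one' := ?_, map_mul' := fun g g' => ?_ }, fun k => ?_, fun g x => ?_⟩
  · ext y; simp [U, extensionOp_one hψ happrox hdense]
  · ext y; simp [U, extensionOp_mul hψ happrox hdense]
  · ext y; simp [U, extensionOp_coe hψ happrox hdense]
  · exact extensionOp_apply hψ happrox hdense g x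

end Extension

namespace Sinf

theorem swap_mem (a b : ℕ) : Equiv.swap a b ∈ Sinf :=
  (toFinite {a, b}).subset fun x hx => by
    by_contra hab
    simp only [mem_insert_iff, mem_singleton_iff, not_or] at hab
    exact hx (Equiv.swap_apply_of_ne_of_ne hab.1 hab.2)

theorem exists_eqOn (g : Equiv.Perm ℕ) (s : Finset ℕ) :
    ∃ k : Sinf, ∀ x ∈ s, (k : Equiv.Perm ℕ) x = g x := by
  classical
  induction s using Finset.induction_on with
  | empty => exact ⟨1, by simp⟩
  | @insert a s ha ih =>
    obtain ⟨⟨k, hkS⟩, hk⟩ := ih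
    refine ⟨⟨Equiv.swap (k a) (g a), swap_mem _ _⟩ * ⟨k, hkS⟩, fun x hx => ?_⟩
    change Equiv.swap (k a) (g a) (k x) = g x
    rcases Finset.mem_insert.1 hx with rfl | hxs
    · exact Equiv.swap_apply_left _ _
    · have hxa : x ≠ a := by rintro rfl; exact ha hxs
      rw [hk x hxs, Equiv.swap_apply_of_ne_of_ne]
      · rw [← hk x hxs]; exact k.injective.ne hxa
      · exact g.injective.ne hxa

end Sinf

section OrbitMap

open Equiv

variable {V : Type*} [NormedAddCommGroup V] [InnerProductSpace ℂ V] {ρ : Sinf →* (V ≃ₗᵢ[ℂ] V)}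
  {v : V} {α : ℕ}

theorem apply_eq_of_mem_fixedVectorsS (hv : v ∈ fixedVectorsS ρ α) {k k' : Sinf}
    (h : ∀ i < α, (k : Perm ℕ) i = (k' : Perm ℕ) i) : ρ k v = ρ k' v := by
  have hfix : ρ (k'⁻¹ * k) v = v := hv _ fun i hi => by
    change (k' : Perm ℕ)⁻¹ ((k : Perm ℕ) i) = i
    simp [h i hi]
  calc ρ k v = ρ (k' * (k'⁻¹ * k)) v := by rw [mul_inv_cancel_left]
    _ = ρ k' (ρ (k'⁻¹ * k) v) := by rw [map_mul, LinearIsometryEquiv.coe_mul, Function.comp_apply]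
    _ = ρ k' v := by rw [hfix]

variable (ρ v α) in
noncomputable def orbitMap (p : Perm ℕ) : V :=
  ρ (Sinf.exists_eqOn p (Finset.range α)).choose v

theorem orbitMap_eq (hv : v ∈ fixedVectorsS ρ α) {p : Perm ℕ} {k : Sinf}
    (hk : ∀ i < α, (k : Perm ℕ) i = p i) : orbitMap ρ v α p = ρ k v :=
  apply_eq_of_mem_fixedVectorsS hv fun i hi =>
    ((Sinf.exists_eqOn p _).choose_spec i (Finset.mem_range.2 hi)).trans (hk i hi).symm

theorem orbitMap_congr (hv : v ∈ fixedVectorsS ρ α) {p p' : Perm ℕ}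
    (h : ∀ i < α, p i = p' i) : orbitMap ρ v α p = orbitMap ρ v α p' :=
  orbitMap_eq hv fun i hi =>
    ((Sinf.exists_eqOn p' _).choose_spec i (Finset.mem_range.2 hi)).trans (h i hi).symm

theorem orbitMap_one (hv : v ∈ fixedVectorsS ρ α) : orbitMap ρ v α 1 = v := by
  rw [orbitMap_eq hv (p := 1) (k := 1) fun i _ => rfl, map_one, LinearIsometryEquiv.coe_one, id]

theorem orbitMap_smul (hv : v ∈ fixedVectorsS ρ α) (k : Sinf) (p : Perm ℕ) :
    orbitMap ρ v α ((k : Perm ℕ) • p) = ρ k (orbitMap ρ v α p) := by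
  obtain ⟨kp, hkp⟩ := Sinf.exists_eqOn p (Finset.range α)
  rw [orbitMap_eq hv fun i hi => hkp i (Finset.mem_range.2 hi),
    orbitMap_eq hv (k := k * kp) fun i hi => by
      simp [smul_eq_mul, hkp i (Finset.mem_range.2 hi)],
    map_mul, LinearIsometryEquiv.coe_mul, Function.comp_apply]

theorem exists_orbitMap_smul_eq (hv : v ∈ fixedVectorsS ρ α) (g : Perm ℕ) (s : Finset (Perm ℕ)) :
    ∃ k : Sinf, ∀ p ∈ s, orbitMap ρ v α (g • p) = orbitMap ρ v α ((k : Perm ℕ) • p) := by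
  obtain ⟨k, hk⟩ := Sinf.exists_eqOn g (s.biUnion fun p => (Finset.range α).image p)
  refine ⟨k, fun p hp => orbitMap_congr hv fun i hi => ?_⟩
  simp only [smul_eq_mul, Perm.mul_apply]
  rw [hk]
  exact Finset.mem_biUnion.2 ⟨p, hp, Finset.mem_image_of_mem _ (Finset.mem_range.2 hi)⟩

end OrbitMap

theorem forall_exists_norm_sub_lt_of_dense {𝕜 V : Type*} [NormedField 𝕜] [NormedAddCommGroup V]
    [NormedSpace 𝕜 V] (ρb : Equiv.Perm ℕ →* (V ≃ₗᵢ[𝕜] V)) {D : Set V} (hD : Dense D)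
    (hfix : ∀ y ∈ D, ∃ β : ℕ, ∀ h : Equiv.Perm ℕ, (∀ i < β, h i = i) → ρb h y = y) :
    ∀ w : V, ∀ ε : ℝ, 0 < ε → ∃ β : ℕ, ∀ h : Equiv.Perm ℕ,
      (∀ i < β, h i = i) → ‖ρb h w - w‖ < ε := by
  intro w ε hε
  obtain ⟨y, hyD, hwy⟩ := Metric.mem_closure_iff.1 (hD w) (ε / 2) (half_pos hε)
  obtain ⟨β, hβ⟩ := hfix y hyD
  refine ⟨β, fun h hh => ?_⟩
  rw [dist_eq_norm] at hwy
  calc ‖ρb h w - w‖ = ‖ρb h (w - y) - (w - y)‖ := by rw [map_sub, hβ h hh]; abel_nf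
    _ ≤ ‖ρb h (w - y)‖ + ‖w - y‖ := norm_sub_le _ _
    _ < ε := by rw [LinearIsometryEquiv.norm_map]; linarith

theorem Submodule.dense_of_irreducible {𝕜 G V : Type*} [NormedField 𝕜] [NormedAddCommGroup V]
    [NormedSpace 𝕜 V] [Monoid G] {ρ : G →* (V ≃ₗᵢ[𝕜] V)}
    (hirr : ∀ W : Submodule 𝕜 V, IsClosed (W : Set V) →
      (∀ g, ∀ v ∈ W, ρ g v ∈ W) → W = ⊥ ∨ W = ⊤)
    {W : Submodule 𝕜 V} (hW : ∀ g, ∀ v ∈ W, ρ g v ∈ W) (hne : W ≠ ⊥) : Dense (W : Set V) := by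
  have hinv : ∀ g, ∀ v ∈ W.topologicalClosure, ρ g v ∈ W.topologicalClosure :=
    fun g _ hv => map_mem_closure (ρ g).continuous hv (hW g)
  rcases hirr _ W.isClosed_topologicalClosure hinv with hbot | htop
  · exact absurd (eq_bot_iff.2 (hbot ▸ W.le_topologicalClosure)) hne
  · rw [dense_iff_closure_eq, ← W.topologicalClosure_coe, htop, Submodule.top_coe]

section ContinuousExtension

variable {V : Type*} [NormedAddCommGroup V] [InnerProductSpace ℂ V] {ρ : Sinf →* (V ≃ₗᵢ[ℂ] V)}
  {v : V} {α : ℕ}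

theorem dense_span_range_orbitMap
    (hirr : ∀ W : Submodule ℂ V, IsClosed (W : Set V) →
      (∀ (g : ↥Sinf), ∀ v ∈ W, ρ g v ∈ W) → W = ⊥ ∨ W = ⊤)
    (hv : v ∈ fixedVectorsS ρ α) (hv0 : v ≠ 0) :
    Dense (Submodule.span ℂ (range (orbitMap ρ v α)) : Set V) := by
  refine Submodule.dense_of_irreducible hirr (fun k w hw => ?_) ?_
  · refine Submodule.span_mono ?_
      (Submodule.apply_mem_span_image_of_mem_span (ρ k).toLinearEquiv.toLinearMap hw)
    rintro _ ⟨_, ⟨p, rfl⟩, rfl⟩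
    exact ⟨(k : Equiv.Perm ℕ) • p, orbitMap_smul hv k p⟩
  · rw [Ne, Submodule.span_eq_bot]
    exact fun h => hv0 (h v ⟨1, orbitMap_one hv⟩)

theorem exists_forall_apply_eq_of_mem_span (hv : v ∈ fixedVectorsS ρ α)
    {ρb : Equiv.Perm ℕ →* (V ≃ₗᵢ[ℂ] V)}
    (hρb : ∀ g p, ρb g (orbitMap ρ v α p) = orbitMap ρ v α (g • p)) {y : V}
    (hy : y ∈ Submodule.span ℂ (range (orbitMap ρ v α))) :
    ∃ β : ℕ, ∀ h : Equiv.Perm ℕ, (∀ i < β, h i = i) → ρb h y = y := by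
  obtain ⟨c, rfl⟩ := Finsupp.mem_span_range_iff_exists_finsupp.1 hy
  obtain ⟨β, hβ⟩ := (c.support.biUnion fun p => (Finset.range α).image p).exists_nat_subset_range
  refine ⟨β, fun h hh => ?_⟩
  rw [map_finsuppSum]
  refine Finsupp.sum_congr fun p hp => ?_
  rw [map_smul, hρb]
  congr 1
  refine orbitMap_congr hv fun i hi => hh _ (Finset.mem_range.1 (hβ ?_))
  exact Finset.mem_biUnion.2 ⟨p, hp, Finset.mem_image_of_mem _ (Finset.mem_range.2 hi)⟩

theorem exists_isContinuousExtension [CompleteSpace V]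
    (hirr : ∀ W : Submodule ℂ V, IsClosed (W : Set V) →
      (∀ (g : ↥Sinf), ∀ v ∈ W, ρ g v ∈ W) → W = ⊥ ∨ W = ⊤)
    (hv : v ∈ fixedVectorsS ρ α) (hv0 : v ≠ 0) :
    ∃ ρb : Equiv.Perm ℕ →* (V ≃ₗᵢ[ℂ] V), IsContinuousExtension ρ ρb := by
  have hdense := dense_span_range_orbitMap hirr hv hv0
  obtain ⟨ρb, hext, hρb⟩ :=
    exists_extension (orbitMap_smul hv) (exists_orbitMap_smul_eq hv) hdense
  exact ⟨ρb, hext, forall_exists_norm_sub_lt_of_dense ρb hdense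
    fun y hy => exists_forall_apply_eq_of_mem_span hv hρb hy⟩

theorem exists_ne_zero_mem_fixedVectorsS [CompleteSpace V] (hnz : ∃ v : V, v ≠ 0)
    {ρb : Equiv.Perm ℕ →* (V ≃ₗᵢ[ℂ] V)} (hρb : IsContinuousExtension ρ ρb) :
    ∃ (α : ℕ) (v : V), v ∈ fixedVectorsS ρ α ∧ v ≠ 0 := by
  obtain ⟨hext, hcont⟩ := hρb
  obtain ⟨v, hv0⟩ := hnz
  obtain ⟨α, hα⟩ := hcont v (‖v‖ / 2) (half_pos (norm_pos_iff.2 hv0))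
  obtain ⟨u, hu0, hu⟩ := exists_ne_zero_forall_mem_apply_eq ρ
    (fixingSubmonoid Sinf (Iio α)) (half_lt_self (norm_pos_iff.2 hv0)) fun h hh => by
      rw [← hext]
      exact (hα _ ((mem_fixingSubmonoid_iff _).1 hh)).le
  exact ⟨α, u, fun h hh => hu h ((mem_fixingSubmonoid_iff _).2 hh), hu0⟩

end ContinuousExtension

/-- An irreducible unitary representation `ρ` of `S_∞` on a (nonzero)
complex Hilbert space `V` admits a continuous extension to the full symmetric group
`Perm(ℕ)` if and only if `V[α] ≠ {0}` for some `α`. -/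
theorem irreducible_extension_iff_exists_nonzero_fixedVector
    {V : Type*} [NormedAddCommGroup V] [InnerProductSpace ℂ V] [CompleteSpace V]
    (ρ : ↥Sinf →* (V ≃ₗᵢ[ℂ] V))
    (hnz : ∃ v : V, v ≠ 0)
    (hirr : ∀ W : Submodule ℂ V, IsClosed (W : Set V) →
      (∀ (g : ↥Sinf), ∀ v ∈ W, ρ g v ∈ W) → W = ⊥ ∨ W = ⊤) :
    (∃ ρb : Equiv.Perm ℕ →* (V ≃ₗᵢ[ℂ] V), IsContinuousExtension ρ ρb) ↔
      ∃ (α : ℕ) (v : V), v ∈ fixedVectorsS ρ α ∧ v ≠ 0 :=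
  ⟨fun ⟨_, hρb⟩ => exists_ne_zero_mem_fixedVectorsS hnz hρb,
    fun ⟨_, _, hv, hv0⟩ => exists_isContinuousExtension hirr hv hv0⟩
end
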